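/- Let S ∈ ℝ^{d×m_s} be a selection matrix, E ∈ ℝ^{q×q*} a selection matrix, and Ē ∈ ℝ^{q×(q−q*)} its complementary selection matrix (so E Eᵀ + Ē Ēᵀ = I_q, EᵀE = I, ĒᵀĒ = I, Eᵀ Ē = 0). Let B ∈ ℝ^{d×m}, C ∈ ℝ^{m×q}, N ∈ ℝ^{d×q}, R := B C − N, R* := R E, C* := C E, Ř := R Ē, Č := C Ē, Ň := N Ē. Assume C* has compact SVD C* = U* Σ* (V*)ᵀ with pseudoinverse (C*)⁺ := V* (Σ*)⁻¹ (U*)ᵀ, and define B_new := B − S Sᵀ R* (C*)⁺ and δ := ‖Sᵀ R‖_F² − ‖Sᵀ (R − R* (C*)⁺ C)‖_F². Then the residual on the unselected columns satisfies ‖B_new Č − Ň‖_F² = ‖B Č − Ň‖_F² − δ + ‖Sᵀ R* V*‖_F². -/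
import Mathlib
open Matrix

noncomputable def frobSq {a b : ℕ} (A : Matrix (Fin a) (Fin b) ℝ) : ℝ :=
  ∑ i, ∑ j, (A i j) ^ 2

lemma frobSq_eq_trace {a b : ℕ} (A : Matrix (Fin a) (Fin b) ℝ) :
    frobSq A = (Aᵀ * A).trace := by
  simp [frobSq, Matrix.trace, Matrix.diag, Matrix.mul_apply, sq]
  exact Finset.sum_comm

lemma frobSq_sub {a b : ℕ} (X Y : Matrix (Fin a) (Fin b) ℝ) :
    frobSq (X - Y) = frobSq X - 2 * (Xᵀ * Y).trace + frobSq Y := by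
  have h : (Yᵀ * X).trace = (Xᵀ * Y).trace := by
    rw [← Matrix.trace_transpose (Yᵀ * X), Matrix.transpose_mul, Matrix.transpose_transpose]
  rw [frobSq_eq_trace, frobSq_eq_trace, frobSq_eq_trace, Matrix.transpose_sub,
    Matrix.sub_mul, Matrix.mul_sub, Matrix.mul_sub, Matrix.trace_sub, Matrix.trace_sub,
    Matrix.trace_sub, h]
  ring

lemma frobSq_mul_left {k a b : ℕ} (P : Matrix (Fin k) (Fin a) ℝ) (hP : Pᵀ * P = 1)
    (X : Matrix (Fin a) (Fin b) ℝ) : frobSq (P * X) = frobSq X := by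
  rw [frobSq_eq_trace, frobSq_eq_trace, Matrix.transpose_mul, Matrix.mul_assoc,
    ← Matrix.mul_assoc Pᵀ, hP, Matrix.one_mul]

lemma frobSq_mul_Vt {a b k : ℕ} (K : Matrix (Fin a) (Fin k) ℝ)
    (V : Matrix (Fin b) (Fin k) ℝ) (hV : Vᵀ * V = 1) : frobSq (K * Vᵀ) = frobSq K := by
  rw [frobSq_eq_trace, frobSq_eq_trace, Matrix.transpose_mul, Matrix.transpose_transpose,
    Matrix.mul_assoc, Matrix.trace_mul_comm, Matrix.mul_assoc, Matrix.mul_assoc,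
    hV, Matrix.mul_one]

lemma trace_GVVt {a b k : ℕ} (G : Matrix (Fin a) (Fin b) ℝ) (V : Matrix (Fin b) (Fin k) ℝ) :
    (Gᵀ * (G * V * Vᵀ)).trace = frobSq (G * V) := by
  rw [frobSq_eq_trace, show Gᵀ * (G * V * Vᵀ) = (Gᵀ * (G * V)) * Vᵀ from by
      simp only [Matrix.mul_assoc],
    Matrix.trace_mul_comm, ← Matrix.mul_assoc, ← Matrix.transpose_mul]

lemma trace_split {a q qs qb : ℕ} (E : Matrix (Fin q) (Fin qs) ℝ)
    (Eb : Matrix (Fin q) (Fin qb) ℝ) (h : E * Eᵀ + Eb * Ebᵀ = 1)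
    (X Y : Matrix (Fin a) (Fin q) ℝ) :
    (Xᵀ * Y).trace = ((X * E)ᵀ * (Y * E)).trace + ((X * Eb)ᵀ * (Y * Eb)).trace := by
  have h1 : (Xᵀ * Y).trace = (Xᵀ * Y * (E * Eᵀ)).trace + (Xᵀ * Y * (Eb * Ebᵀ)).trace := by
    rw [← Matrix.trace_add, ← Matrix.mul_add, h, Matrix.mul_one]
  rw [h1]
  congr 1
  · rw [show Xᵀ * Y * (E * Eᵀ) = (Xᵀ * Y * E) * Eᵀ from by simp only [Matrix.mul_assoc],
      Matrix.trace_mul_comm]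
    congr 1
    simp only [Matrix.transpose_mul, Matrix.mul_assoc]
  · rw [show Xᵀ * Y * (Eb * Ebᵀ) = (Xᵀ * Y * Eb) * Ebᵀ from by simp only [Matrix.mul_assoc],
      Matrix.trace_mul_comm]
    congr 1
    simp only [Matrix.transpose_mul, Matrix.mul_assoc]

lemma frobSq_split {a q qs qb : ℕ} (E : Matrix (Fin q) (Fin qs) ℝ)
    (Eb : Matrix (Fin q) (Fin qb) ℝ) (h : E * Eᵀ + Eb * Ebᵀ = 1)
    (X : Matrix (Fin a) (Fin q) ℝ) :
    frobSq X = frobSq (X * E) + frobSq (X * Eb) := by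
  rw [frobSq_eq_trace, frobSq_eq_trace, frobSq_eq_trace]
  exact trace_split E Eb h X X

/-- Residual on the unselected columns after the EIM update:
`‖B_new Č − Ň‖_F² = ‖B Č − Ň‖_F² − δ + ‖Sᵀ R* V*‖_F²`. -/
theorem eim_update_residual_unselected
    (d ms m q qs c : ℕ)
    (ι : Fin ms → Fin d) (hι : Function.Injective ι)
    (ε : Fin qs → Fin q) (hε : Function.Injective ε)
    (κ : Fin (q - qs) → Fin q) (hκ : Function.Injective κ)
    (S : Matrix (Fin d) (Fin ms) ℝ)
    (hS : S = Matrix.of fun i j => if i = ι j then (1 : ℝ) else 0)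
    (E : Matrix (Fin q) (Fin qs) ℝ)
    (hE : E = Matrix.of fun i j => if i = ε j then (1 : ℝ) else 0)
    (Ebar : Matrix (Fin q) (Fin (q - qs)) ℝ)
    (hEbar : Ebar = Matrix.of fun i j => if i = κ j then (1 : ℝ) else 0)
    (hcompl : E * Eᵀ + Ebar * Ebarᵀ = 1)
    (hEE : Eᵀ * E = 1) (hEbarEbar : Ebarᵀ * Ebar = 1) (hdisj : Eᵀ * Ebar = 0)
    (B : Matrix (Fin d) (Fin m) ℝ) (C : Matrix (Fin m) (Fin q) ℝ)
    (N : Matrix (Fin d) (Fin q) ℝ)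
    (R : Matrix (Fin d) (Fin q) ℝ) (hR : R = B * C - N)
    (U : Matrix (Fin m) (Fin c) ℝ) (Sg : Matrix (Fin c) (Fin c) ℝ)
    (V : Matrix (Fin qs) (Fin c) ℝ)
    (hU : Uᵀ * U = 1) (hV : Vᵀ * V = 1)
    (hSgDiag : Sg.IsDiag) (hSgPos : ∀ i, 0 < Sg i i)
    (hSVD : C * E = U * Sg * Vᵀ)
    (Cplus : Matrix (Fin qs) (Fin m) ℝ) (hCplus : Cplus = V * Sg⁻¹ * Uᵀ)
    (Bnew : Matrix (Fin d) (Fin m) ℝ)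
    (hBnew : Bnew = B - S * Sᵀ * (R * E) * Cplus)
    (δ : ℝ)
    (hδ : δ = frobSq (Sᵀ * R) - frobSq (Sᵀ * (R - (R * E) * Cplus * C))) :
    frobSq (Bnew * (C * Ebar) - N * Ebar) =
      frobSq (B * (C * Ebar) - N * Ebar) - δ + frobSq (Sᵀ * (R * E) * V) := by
  have hSS : Sᵀ * S = 1 := by
    subst hS
    ext j k
    simp [Matrix.mul_apply, Matrix.one_apply, hι.eq_iff, eq_comm]
  have hSgInv : Sg⁻¹ * Sg = 1 := by
    apply Matrix.nonsing_inv_mul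
    rw [isUnit_iff_ne_zero, ← hSgDiag.diagonal_diag, Matrix.det_diagonal]
    exact Finset.prod_ne_zero_iff.mpr fun i _ => (hSgPos i).ne'
  have hCpCE : Cplus * (C * E) = V * Vᵀ := by
    rw [hCplus, hSVD]
    simp only [Matrix.mul_assoc]
    rw [← Matrix.mul_assoc Uᵀ U, hU, Matrix.one_mul, ← Matrix.mul_assoc Sg⁻¹ Sg,
      hSgInv, Matrix.one_mul]
  -- normalize to left-associated products
  simp only [← Matrix.mul_assoc] at hBnew hδ ⊢
  have hRE : B * C * Ebar - N * Ebar = R * Ebar := by rw [hR, Matrix.sub_mul]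
  -- abbreviations (definitional): A := Sᵀ*R, Q := Sᵀ*R*E*Cplus*C, T := Q*Ebar
  have hLHS : Bnew * C * Ebar - N * Ebar
      = R * Ebar - S * (Sᵀ * R * E * Cplus * C * Ebar) := by
    rw [hBnew, Matrix.sub_mul, Matrix.sub_mul, sub_right_comm, hRE]
    congr 1
    simp only [Matrix.mul_assoc]
  rw [hLHS, hRE]
  have n1 := frobSq_sub (R * Ebar) (S * (Sᵀ * R * E * Cplus * C * Ebar))
  have n2 : frobSq (S * (Sᵀ * R * E * Cplus * C * Ebar))
      = frobSq (Sᵀ * R * E * Cplus * C * Ebar) := frobSq_mul_left S hSS _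
  have n3 : ((R * Ebar)ᵀ * (S * (Sᵀ * R * E * Cplus * C * Ebar))).trace
      = ((Sᵀ * R * Ebar)ᵀ * (Sᵀ * R * E * Cplus * C * Ebar)).trace := by
    congr 1
    simp only [Matrix.transpose_mul, Matrix.transpose_transpose, Matrix.mul_assoc]
  -- δ rewriting
  have hδ2 : δ = frobSq (Sᵀ * R) - frobSq (Sᵀ * R - Sᵀ * R * E * Cplus * C) := by
    rw [hδ]
    congr 2
    rw [Matrix.mul_sub]
    simp only [Matrix.mul_assoc]
  have n4 := frobSq_sub (Sᵀ * R) (Sᵀ * R * E * Cplus * C)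
  have n5 := trace_split E Ebar hcompl (Sᵀ * R) (Sᵀ * R * E * Cplus * C)
  have n6 := frobSq_split E Ebar hcompl (Sᵀ * R * E * Cplus * C)
  have hQE : Sᵀ * R * E * Cplus * C * E = Sᵀ * R * E * V * Vᵀ := by
    rw [Matrix.mul_assoc (Sᵀ * R * E * Cplus), Matrix.mul_assoc (Sᵀ * R * E), hCpCE,
      ← Matrix.mul_assoc]
  have n7 : ((Sᵀ * R * E)ᵀ * (Sᵀ * R * E * Cplus * C * E)).trace
      = frobSq (Sᵀ * R * E * V) := by
    rw [hQE]; exact trace_GVVt (Sᵀ * R * E) V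
  have n8 : frobSq (Sᵀ * R * E * Cplus * C * E) = frobSq (Sᵀ * R * E * V) := by
    rw [hQE]; exact frobSq_mul_Vt (Sᵀ * R * E * V) V hV
  rw [n5] at n4
  rw [hδ2]
  linarith [n1, n2, n3, n4, n6, n7, n8]
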